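/- Let H ≤ GL_N(R) contain ∧^m E(n,R) with n ≥ 2m+1. If for distinct disjoint m-element subsets I, J of {1,…,n} and ξ ∈ R the transvection t_{I,J}(ξ) lies in H, then for any index j ∈ J and any j' ∉ I ∪ J the transvection t_{I, (J\{j})∪{j'}}(ξζ) lies in H for all ζ ∈ R. -/

import Mathlib

open Matrix

abbrev Idx (n m : ℕ) := {s : Finset (Fin n) // s.card = m}

def extPow {R : Type*} [CommRing R] (n m : ℕ) (x : Matrix (Fin n) (Fin n) R) :
    Matrix (Idx n m) (Idx n m) R :=
  fun I J => (x.submatrix (⇑(I.1.orderEmbOfFin I.2)) (⇑(J.1.orderEmbOfFin J.2))).det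

def memGL {R : Type*} [CommRing R] {ι : Type*} [Fintype ι] [DecidableEq ι]
    (H : Subgroup (GL ι R)) (x : Matrix ι ι R) : Prop :=
  ∃ g ∈ H, (g : Matrix ι ι R) = x

def swapIdx {n m : ℕ} (J : Idx n m) (j j' : Fin n) (hj : j ∈ J.1) (hj' : j' ∉ J.1) : Idx n m :=
  ⟨insert j' (J.1.erase j), by
    rw [Finset.card_insert_of_notMem (fun h => hj' (Finset.mem_of_mem_erase h)),
      Finset.card_erase_of_mem hj]
    have h1 : 0 < J.1.card := Finset.card_pos.mpr ⟨j, hj⟩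
    omega⟩

/-!
Let `A = ∧^m t_{j,j'}(c)` and `J̃ = (J \ {j}) ∪ {j'}`. Column `I` and row `J̃` of `A` are
those of the identity (as `j' ∉ I` and `j ∉ J̃`), and row `J` is `e_J + c u e_{J̃}` with
`u = ±1`: the `J × J̃` minor of `t_{j,j'}(c)` is `c` times a minor of the identity that is a
permutation matrix. For any invertible `A` of this shape,
`t_{I,J}(ξ) A t_{I,J}(-ξ) A⁻¹ = t_{I,J̃}(ξ c u)`, and `c = u⁻¹ ζ` gives the claim.
-/
namespace Matrix

variable {ι R : Type*} [Fintype ι] [DecidableEq ι] [CommRing R]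

theorem single_mul_eq_single_mul_of_row_eq {A B : Matrix ι ι R} {k : ι}
    (h : ∀ l, A k l = B k l) (i : ι) (c : R) : single i k c * A = single i k c * B := by
  ext a b
  by_cases ha : a = i
  · subst ha
    simp only [single_mul_apply_same, h]
  · simp only [single_mul_apply_of_ne _ _ _ _ _ ha]

theorem mul_single_eq_mul_single_of_col_eq {A B : Matrix ι ι R} {i : ι}
    (h : ∀ l, A l i = B l i) (k : ι) (c : R) : A * single i k c = B * single i k c := by
  ext a b
  by_cases hb : b = k
  · subst hb
    simp only [mul_single_apply_same, h]
  · simp only [mul_single_apply_of_ne _ _ _ _ _ hb]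

theorem transvection_mul_mul_mul_eq_transvection {A B T : Matrix ι ι R} {i k k' : ι}
    (hik : i ≠ k) {ξ a : R} (hT : transvection i k ξ * T = 1) (hAB : A * B = 1)
    (hcol : ∀ l, A l i = (1 : Matrix ι ι R) l i)
    (hrow : ∀ l, A k l = transvection k k' a k l)
    (hrow' : ∀ l, A k' l = (1 : Matrix ι ι R) k' l) :
    transvection i k ξ * A * T * B = transvection i k' (ξ * a) := by
  have hT_eq : T = transvection i k (-ξ) := calc
    T = transvection i k (-ξ) * transvection i k ξ * T := by
      rw [transvection_mul_transvection_same _ _ hik, neg_add_cancel, transvection_zero, one_mul]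
    _ = transvection i k (-ξ) := by rw [mul_assoc, hT, mul_one]
  have hAE : A * single i k (-ξ) = single i k (-ξ) := by
    rw [mul_single_eq_mul_single_of_col_eq hcol, one_mul]
  have hEA : single i k ξ * A = single i k ξ + single i k' (ξ * a) := by
    rw [single_mul_eq_single_mul_of_row_eq hrow, transvection, mul_add, mul_one,
      single_mul_single_same]
  have hFA : single i k' (ξ * a) * A = single i k' (ξ * a) := by
    rw [single_mul_eq_single_mul_of_row_eq hrow', mul_one]
  have hEE : single i k ξ * single i k (-ξ) = 0 := single_mul_single_of_ne _ _ _ _ hik.symm _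
  have hconj : transvection i k ξ * (A * transvection i k (-ξ)) = A + single i k' (ξ * a) := by
    simp only [transvection, mul_add, add_mul, one_mul, mul_one, hAE, hEA, hEE, add_zero]
    have hneg : single i k (-ξ) = -single i k ξ := by
      rw [eq_neg_iff_add_eq_zero, ← single_add, neg_add_cancel, single_zero]
    rw [hneg]
    abel
  calc transvection i k ξ * A * T * B
      = (A + single i k' (ξ * a)) * B := by rw [hT_eq, mul_assoc _ A, hconj]
    _ = 1 + single i k' (ξ * a) * A * B := by rw [add_mul, hAB, hFA]
    _ = transvection i k' (ξ * a) := by rw [mul_assoc, hAB, mul_one, transvection]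

theorem isUnit_det_one_submatrix {κ : Type*} [DecidableEq κ]
    {f g : ι → κ} (hf : Function.Injective f) (hg : Function.Injective g)
    (hfg : ∀ p, ∃ q, g q = f p) : IsUnit ((1 : Matrix κ κ R).submatrix f g).det := by
  choose τ hτ using hfg
  have hτ_inj : Function.Injective τ := fun p p' h => hf (by rw [← hτ p, ← hτ p', h])
  let σ := Equiv.ofBijective τ hτ_inj.bijective_of_finite
  have hfσ : (1 : Matrix κ κ R).submatrix f g = (1 : Matrix ι ι R).submatrix σ id := by
    ext p q
    simp [σ, ← hτ p, one_apply, hg.eq_iff]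
  rw [hfσ, det_permute, det_one, mul_one]
  exact (Equiv.Perm.sign σ).isUnit.map (Int.castRingHom R)

end Matrix

namespace Idx

variable {n m : ℕ}

def emb (K : Idx n m) : Fin m ↪o Fin n := K.1.orderEmbOfFin K.2

theorem emb_mem (K : Idx n m) (p : Fin m) : K.emb p ∈ K.1 :=
  Finset.orderEmbOfFin_mem _ _ _

theorem exists_emb_eq (K : Idx n m) {a : Fin n} (ha : a ∈ K.1) : ∃ p, K.emb p = a := by
  rw [← Finset.mem_coe, ← Finset.range_orderEmbOfFin K.1 K.2] at ha
  exact ha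

theorem exists_mem_notMem_of_ne {K L : Idx n m} (h : K ≠ L) : ∃ a ∈ K.1, a ∉ L.1 := by
  by_contra! hKL
  exact h (Subtype.ext (Finset.eq_of_subset_of_card_le hKL (by rw [K.2, L.2])))

end Idx

section ExtPow

variable {R : Type*} [CommRing R] {n m : ℕ}

theorem extPow_apply (x : Matrix (Fin n) (Fin n) R) (K L : Idx n m) :
    extPow n m x K L = (x.submatrix K.emb L.emb).det :=
  rfl

theorem extPow_apply_congr {x y : Matrix (Fin n) (Fin n) R} {K L : Idx n m}
    (h : ∀ a ∈ K.1, ∀ b ∈ L.1, x a b = y a b) : extPow n m x K L = extPow n m y K L := by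
  rw [extPow_apply, extPow_apply]
  congr 1
  ext p q
  exact h _ (K.emb_mem p) _ (L.emb_mem q)

theorem extPow_apply_eq_zero_of_row {x : Matrix (Fin n) (Fin n) R} {K L : Idx n m} {a : Fin n}
    (ha : a ∈ K.1) (hx : ∀ b ∈ L.1, x a b = 0) : extPow n m x K L = 0 := by
  obtain ⟨p, rfl⟩ := K.exists_emb_eq ha
  exact det_eq_zero_of_row_eq_zero p fun q => hx _ (L.emb_mem q)

theorem extPow_one : extPow n m (1 : Matrix (Fin n) (Fin n) R) = 1 := by
  ext K L
  by_cases h : K = L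
  · rw [h, one_apply_eq, extPow_apply, submatrix_one _ L.emb.injective, det_one]
  · obtain ⟨a, haK, haL⟩ := Idx.exists_mem_notMem_of_ne h
    rw [one_apply_ne h]
    exact extPow_apply_eq_zero_of_row haK fun b hb =>
      one_apply_ne (ne_of_mem_of_not_mem hb haL).symm

theorem extPow_transvection_apply_of_notMem_left {j j' : Fin n} {K : Idx n m} (hj : j ∉ K.1)
    (c : R) (L : Idx n m) :
    extPow n m (transvection j j' c) K L = (1 : Matrix (Idx n m) (Idx n m) R) K L := by
  rw [← extPow_one]
  refine extPow_apply_congr fun a ha b _ => ?_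
  rw [transvection, Matrix.add_apply, single_apply_of_row_ne (ne_of_mem_of_not_mem ha hj).symm,
    add_zero]

theorem extPow_transvection_apply_of_notMem_right {j j' : Fin n} {L : Idx n m} (hj' : j' ∉ L.1)
    (c : R) (K : Idx n m) :
    extPow n m (transvection j j' c) K L = (1 : Matrix (Idx n m) (Idx n m) R) K L := by
  rw [← extPow_one]
  refine extPow_apply_congr fun a _ b hb => ?_
  rw [transvection, Matrix.add_apply,
    single_apply_of_col_ne _ _ (ne_of_mem_of_not_mem hb hj').symm, add_zero]

section SwapIdx

variable {j j' : Fin n} {J : Idx n m} (hj : j ∈ J.1) (hj' : j' ∉ J.1)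

theorem mem_swapIdx_right : j' ∈ (swapIdx J j j' hj hj').1 :=
  Finset.mem_insert_self _ _

theorem notMem_swapIdx_left : j ∉ (swapIdx J j j' hj hj').1 := by
  simp [swapIdx, ne_of_mem_of_not_mem hj hj']

theorem swap_apply_mem_swapIdx {a : Fin n} (ha : a ∈ J.1) :
    Equiv.swap j j' a ∈ (swapIdx J j j' hj hj').1 := by
  by_cases h : a = j
  · rw [h, Equiv.swap_apply_left]
    exact mem_swapIdx_right hj hj'
  · rw [Equiv.swap_apply_of_ne_of_ne h (ne_of_mem_of_not_mem ha hj')]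
    exact Finset.mem_insert_of_mem (Finset.mem_erase.mpr ⟨h, ha⟩)

theorem extPow_transvection_apply_swapIdx (c : R) :
    extPow n m (transvection j j' c) J (swapIdx J j j' hj hj') =
      c * ((1 : Matrix (Fin n) (Fin n) R).submatrix (Equiv.swap j j' ∘ J.emb)
        (swapIdx J j j' hj hj').emb).det := by
  set J' := swapIdx J j j' hj hj'
  obtain ⟨p₀, hp₀⟩ := J.exists_emb_eq hj
  have hrows : (transvection j j' c).submatrix J.emb J'.emb = of fun p q =>
      (if p = p₀ then c else 1) *
        (1 : Matrix (Fin n) (Fin n) R).submatrix (Equiv.swap j j' ∘ J.emb) J'.emb p q := by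
    ext p q
    have hj_ne : j ≠ J'.emb q :=
      (ne_of_mem_of_not_mem (J'.emb_mem q) (notMem_swapIdx_left hj hj')).symm
    by_cases hp : p = p₀
    · subst hp
      simp [transvection, hp₀, one_apply, single_apply, hj_ne]
    · have h1 : J.emb p ≠ j := hp₀ ▸ J.emb.injective.ne hp
      have h2 : J.emb p ≠ j' := ne_of_mem_of_not_mem (J.emb_mem p) hj'
      rw [of_apply, if_neg hp, one_mul, submatrix_apply, submatrix_apply, transvection,
        Matrix.add_apply, single_apply_of_row_ne h1.symm, add_zero, Function.comp_apply,
        Equiv.swap_apply_of_ne_of_ne h1 h2]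
  rw [extPow_apply, hrows, det_mul_column, Fintype.prod_ite_eq']

theorem extPow_transvection_apply_of_ne_swapIdx {L : Idx n m} (hL : L ≠ swapIdx J j j' hj hj')
    (c : R) : extPow n m (transvection j j' c) J L = (1 : Matrix (Idx n m) (Idx n m) R) J L := by
  obtain ⟨a, haJ', haL⟩ := Idx.exists_mem_notMem_of_ne hL.symm
  rcases Finset.mem_insert.mp haJ' with rfl | haJ
  · exact extPow_transvection_apply_of_notMem_right haL c J
  · obtain ⟨haj, haJ⟩ := Finset.mem_erase.mp haJ
    rw [one_apply_ne fun h : J = L => haL (h ▸ haJ)]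
    refine extPow_apply_eq_zero_of_row haJ fun b hb => ?_
    rw [transvection, Matrix.add_apply, one_apply_ne (ne_of_mem_of_not_mem hb haL).symm,
      single_apply_of_row_ne (Ne.symm haj), add_zero]

theorem exists_isUnit_extPow_transvection_apply_eq :
    ∃ u : R, IsUnit u ∧ ∀ (c : R) (L : Idx n m),
      extPow n m (transvection j j' c) J L =
        transvection J (swapIdx J j j' hj hj') (c * u) J L := by
  set J' := swapIdx J j j' hj hj'
  refine ⟨_, isUnit_det_one_submatrix ((Equiv.injective _).comp J.emb.injective) J'.emb.injective
    fun p => J'.exists_emb_eq (swap_apply_mem_swapIdx hj hj' (J.emb_mem p)), fun c L => ?_⟩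
  by_cases hL : L = J'
  · have hJJ' : J ≠ J' := fun h => hj' (h ▸ mem_swapIdx_right hj hj')
    rw [hL, extPow_transvection_apply_swapIdx, transvection, Matrix.add_apply, single_apply_same,
      one_apply_ne hJJ', zero_add]
  · rw [extPow_transvection_apply_of_ne_swapIdx hj hj' hL, transvection, Matrix.add_apply,
      single_apply_of_col_ne _ _ (Ne.symm hL), add_zero]

end SwapIdx

end ExtPow

theorem second_type_consequence_general {R : Type*} [CommRing R] {n m : ℕ}
    (H : Subgroup (GL (Idx n m) R))
    (hE : ∀ i j : Fin n, i ≠ j → ∀ ξ : R, memGL H (extPow n m (Matrix.transvection i j ξ)))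
    (I J : Idx n m) (hIJ : I ≠ J)
    (j j' : Fin n) (hj : j ∈ J.1) (hj' : j' ∉ I.1 ∪ J.1)
    (ξ : R) (hξ : memGL H (Matrix.transvection I J ξ)) (ζ : R) :
    memGL H (Matrix.transvection I
      (swapIdx J j j' hj (fun h => hj' (Finset.mem_union_right _ h))) (ξ * ζ)) := by
  obtain ⟨hj'I, hj'J⟩ := Finset.notMem_union.mp hj'
  obtain ⟨u, hu, hrow⟩ := exists_isUnit_extPow_transvection_apply_eq (R := R) hj hj'J
  obtain ⟨v, hv⟩ := hu.exists_right_inv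
  obtain ⟨gA, hgA, hA⟩ := hE j j' (ne_of_mem_of_not_mem hj hj'J) (v * ζ)
  obtain ⟨gT, hgT, hT⟩ := hξ
  refine ⟨gT * gA * gT⁻¹ * gA⁻¹,
    mul_mem (mul_mem (mul_mem hgT hgA) (inv_mem hgT)) (inv_mem hgA), ?_⟩
  have hvu : ξ * (v * ζ * u) = ξ * ζ := by linear_combination ξ * ζ * hv
  rw [Units.val_mul, Units.val_mul, Units.val_mul, hT, hA, ← hvu]
  exact transvection_mul_mul_mul_eq_transvection hIJ (hT ▸ gT.mul_inv) (hA ▸ gA.mul_inv)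
    (extPow_transvection_apply_of_notMem_right hj'I _) (hrow _)
    (extPow_transvection_apply_of_notMem_left (notMem_swapIdx_left hj hj'J) _)

/-- Let `n ≥ 2m+1` and `H ≤ GL_N(R)` contain `∧^m E(n,R)`.  If `I`, `J` are disjoint
distinct `m`-element subsets, `t_{I,J}(ξ) ∈ H`, `j ∈ J` and `j' ∉ I ∪ J`, then
`t_{I, (J\{j})∪{j'}}(ξζ) ∈ H` for all `ζ ∈ R`. -/
theorem second_type_consequence {R : Type*} [CommRing R] {n m : ℕ}
    (hm : 2 ≤ m) (hn : 2 * m + 1 ≤ n) (H : Subgroup (GL (Idx n m) R))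
    (hE : ∀ i j : Fin n, i ≠ j → ∀ ξ : R, memGL H (extPow n m (Matrix.transvection i j ξ)))
    (I J : Idx n m) (hIJ : I ≠ J) (hdisj : Disjoint I.1 J.1)
    (j j' : Fin n) (hj : j ∈ J.1) (hj' : j' ∉ I.1 ∪ J.1)
    (ξ : R) (hξ : memGL H (Matrix.transvection I J ξ)) (ζ : R) :
    memGL H (Matrix.transvection I
      (swapIdx J j j' hj (fun h => hj' (Finset.mem_union_right _ h))) (ξ * ζ)) :=
  second_type_consequence_general H hE I J hIJ j j' hj hj' ξ hξ ζ
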